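/- arXiv:2301.03113 — 4 statements merged into one kernel-verified Lean document; each statement's English description precedes it below -/
import Mathlib

section
/- Let L := {x = [x_1,…,x_n] ∈ ℝ^{np} : x_i = x_1 for all i} be the consensus subspace, B : ℝ^p ⇉ ℝ^p maximally monotone, and define B : ℝ^{np} ⇉ ℝ^{np} by B x := [nB x_1, 0, …, 0]. Then for any β > 0 and u = [u_1,…,u_n] ∈ ℝ^{np}, the resolvent satisfies J_{β(B + ∂δ_L)} u = [û, …, û], where û := J_{βB}((1/n)∑_{i=1}^n u_i). -/
/-!
Writing the inclusion `u ∈ x + β(𝐁 x + ∂δ_L(x))` blockwise, `x` is a constant vector `[c, …, c]`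
and summing the blocks kills the normal-cone component `s ∈ L^⊥`, leaving
`∑ uᵢ = n (c + β w)` with `w ∈ B c`. Dividing by `n`, this says exactly that
`c = J_{βB}((1/n) ∑ uᵢ)`. Conversely, given such `w`, take `b = [n w, 0, …, 0]` and let
`sᵢ = β⁻¹(uᵢ - c) - bᵢ` absorb the rest; its block sum vanishes by the same computation.
-/

open scoped InnerProductSpace

section

variable {𝕜 E : Type*} [Field 𝕜] [AddCommGroup E] [Module 𝕜 E]

theorem eq_resolvent_iff {B : E → Set E} {J : E → E} {β : 𝕜} (hβ : β ≠ 0)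
    (hJ1 : ∀ u, β⁻¹ • (u - J u) ∈ B (J u)) (hJ2 : ∀ u x, β⁻¹ • (u - x) ∈ B x → x = J u)
    (v y : E) : y = J v ↔ ∃ w ∈ B y, v = y + β • w := by
  constructor
  · rintro rfl
    exact ⟨_, hJ1 v, by rw [smul_inv_smul₀ hβ, add_sub_cancel]⟩
  · rintro ⟨w, hw, rfl⟩
    exact hJ2 _ _ (by rwa [add_sub_cancel_left, inv_smul_smul₀ hβ])

/-- `b` and `s` play the roles of elements of `𝐁 x` and `∂δ_L(x)` for `x = [c, …, c]`. -/
theorem exists_decomposition_iff_sum_eq {ι : Type*} [Fintype ι] [DecidableEq ι] (i₀ : ι)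
    {β : 𝕜} (hβ : β ≠ 0) (c w : E) (u : ι → E) :
    (∃ b s : ι → E, (b i₀ = (Fintype.card ι : 𝕜) • w ∧ ∀ i, i ≠ i₀ → b i = 0) ∧
        ∑ i, s i = 0 ∧ ∀ i, u i = c + β • (b i + s i)) ↔
      ∑ i, u i = (Fintype.card ι : 𝕜) • (c + β • w) := by
  constructor
  · rintro ⟨b, s, ⟨hb₀, hb⟩, hs, hu⟩
    have hsum_b : ∑ i, b i = (Fintype.card ι : 𝕜) • w := (Fintype.sum_eq_single i₀ hb).trans hb₀
    calc ∑ i, u i = ∑ i, (c + β • (b i + s i)) := Finset.sum_congr rfl fun i _ => hu i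
      _ = (Fintype.card ι : 𝕜) • c + β • (∑ i, b i + ∑ i, s i) := by
        rw [Finset.sum_add_distrib, ← Finset.smul_sum, Finset.sum_add_distrib, Finset.sum_const,
          Finset.card_univ, Nat.cast_smul_eq_nsmul]
      _ = (Fintype.card ι : 𝕜) • (c + β • w) := by
        rw [hsum_b, hs, add_zero, smul_add, smul_comm β]
  · intro hsum
    set b : ι → E := Pi.single i₀ ((Fintype.card ι : 𝕜) • w)
    have hb₀ : b i₀ = (Fintype.card ι : 𝕜) • w := Pi.single_eq_same _ _
    have hb : ∀ i, i ≠ i₀ → b i = 0 := fun i hi => Pi.single_eq_of_ne hi _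
    refine ⟨b, fun i => β⁻¹ • (u i - c) - b i, ⟨hb₀, hb⟩, ?_,
      fun i => by rw [add_sub_cancel, smul_inv_smul₀ hβ, add_sub_cancel]⟩
    have hsum_b : ∑ i, b i = (Fintype.card ι : 𝕜) • w := (Fintype.sum_eq_single i₀ hb).trans hb₀
    rw [Finset.sum_sub_distrib, ← Finset.smul_sum, Finset.sum_sub_distrib, hsum, hsum_b,
      Finset.sum_const, Finset.card_univ, ← Nat.cast_smul_eq_nsmul 𝕜, smul_add, add_sub_cancel_left,
      smul_comm, inv_smul_smul₀ hβ, sub_self]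

end

theorem resolvent_of_product_operator_general
    {p n : ℕ} [NeZero n]
    (B : EuclideanSpace ℝ (Fin p) → Set (EuclideanSpace ℝ (Fin p)))
    (β : ℝ) (hβ : 0 < β)
    -- J is the resolvent J_{βB} = (I + βB)⁻¹ :
    (J : EuclideanSpace ℝ (Fin p) → EuclideanSpace ℝ (Fin p))
    (hJ1 : ∀ u, β⁻¹ • (u - J u) ∈ B (J u))
    (hJ2 : ∀ u x, β⁻¹ • (u - x) ∈ B x → x = J u)
    (u : Fin n → EuclideanSpace ℝ (Fin p))
    (uhat : EuclideanSpace ℝ (Fin p))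
    (huhat : uhat = J ((n : ℝ)⁻¹ • ∑ i, u i)) :
    ∀ x : Fin n → EuclideanSpace ℝ (Fin p),
      (∃ b s : Fin n → EuclideanSpace ℝ (Fin p),
        -- b ∈ 𝐁 x :
        (∃ w ∈ B (x 0), b 0 = (n : ℝ) • w ∧ ∀ i, i ≠ 0 → b i = 0) ∧
        -- s ∈ ∂δ_L(x) :
        (∀ i, x i = x 0) ∧ (∑ i, s i = 0) ∧
        -- u = x + β (b + s) :
        (∀ i, u i = x i + β • (b i + s i)))
      ↔ x = fun _ => uhat := by
  have hn : (n : ℝ) ≠ 0 := Nat.cast_ne_zero.mpr (NeZero.ne n)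
  have hdecomp := exists_decomposition_iff_sum_eq (0 : Fin n) hβ.ne' (E := EuclideanSpace ℝ (Fin p))
  simp only [Fintype.card_fin] at hdecomp
  intro x
  constructor
  · rintro ⟨b, s, ⟨w, hw, hb⟩, hx, hs, hu⟩
    have hsum := (hdecomp (x 0) w u).mp ⟨b, s, hb, hs, fun i => hx i ▸ hu i⟩
    have hx₀ : x 0 = uhat :=
      huhat ▸ (eq_resolvent_iff hβ.ne' hJ1 hJ2 _ _).mpr ⟨w, hw, (inv_smul_eq_iff₀ hn).mpr hsum⟩
    funext i
    rw [hx i, hx₀]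
  · rintro rfl
    obtain ⟨w, hw, havg⟩ := (eq_resolvent_iff hβ.ne' hJ1 hJ2 _ _).mp huhat
    obtain ⟨b, s, hb, hs, hu⟩ := (hdecomp uhat w u).mpr ((inv_smul_eq_iff₀ hn).mp havg)
    exact ⟨b, s, ⟨w, hw, hb⟩, fun _ => rfl, hs, hu⟩

/-- The resolvent of `β(𝐁 + ∂δ_L)` on the product space, where
`𝐁 x = [nB x₁, 0, …, 0]` and `L` is the consensus subspace, is the constant vector
`[û, …, û]` with `û = J_{βB}((1/n)∑ uᵢ)`.  The inclusion
`u ∈ x + β(𝐁 x + ∂δ_L(x))` is unfolded explicitly: `b ∈ 𝐁 x`, `s ∈ ∂δ_L(x)`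
(which requires `x ∈ L`, i.e. all blocks equal, and `∑ sᵢ = 0`). -/
theorem resolvent_of_product_operator
    {p n : ℕ} [NeZero n]
    (B : EuclideanSpace ℝ (Fin p) → Set (EuclideanSpace ℝ (Fin p)))
    -- B is (maximally) monotone:
    (hBmono : ∀ x y u v, u ∈ B x → v ∈ B y → (0 : ℝ) ≤ ⟪u - v, x - y⟫_ℝ)
    (β : ℝ) (hβ : 0 < β)
    -- J is the resolvent J_{βB} = (I + βB)⁻¹ :
    (J : EuclideanSpace ℝ (Fin p) → EuclideanSpace ℝ (Fin p))
    (hJ1 : ∀ u, β⁻¹ • (u - J u) ∈ B (J u))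
    (hJ2 : ∀ u x, β⁻¹ • (u - x) ∈ B x → x = J u)
    (u : Fin n → EuclideanSpace ℝ (Fin p))
    (uhat : EuclideanSpace ℝ (Fin p))
    (huhat : uhat = J ((n : ℝ)⁻¹ • ∑ i, u i)) :
    ∀ x : Fin n → EuclideanSpace ℝ (Fin p),
      (∃ b s : Fin n → EuclideanSpace ℝ (Fin p),
        -- b ∈ 𝐁 x :
        (∃ w ∈ B (x 0), b 0 = (n : ℝ) • w ∧ ∀ i, i ≠ 0 → b i = 0) ∧
        -- s ∈ ∂δ_L(x) :
        (∀ i, x i = x 0) ∧ (∑ i, s i = 0) ∧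
        -- u = x + β (b + s) :
        (∀ i, u i = x i + β • (b i + s i)))
      ↔ x = fun _ => uhat :=
  resolvent_of_product_operator_general B β hβ J hJ1 hJ2 u uhat huhat
end

section
/- Let R : ℝ^p ⇉ ℝ^p be maximally monotone and A : ℝ^p → ℝ^p be L-Lipschitz continuous with L > 0, λ > 0 with λL < 1. Define the forward-backward-forward splitting operator S^λ x := x − J_{λR}(x − λAx) − λ(Ax − A(J_{λR}(x − λAx))). Then S^λ is Lipschitz continuous with constant L_s := (1 + λL)(2 + λL), and S^λ x* = 0 if and only if 0 ∈ A x* + R x*. -/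
open scoped InnerProductSpace

/-- The forward-backward-forward splitting operator `S^λ` is
Lipschitz with constant `(1 + λL)(2 + λL)`, and `S^λ x = 0` iff `0 ∈ Ax + Rx`.
`J` is the resolvent `(I + λR)⁻¹` of the maximally monotone operator `λR`. -/
theorem fbf_lipschitz_and_zero_characterization
    {p : ℕ}
    (R : EuclideanSpace ℝ (Fin p) → Set (EuclideanSpace ℝ (Fin p)))
    (hRmono : ∀ x y u v, u ∈ R x → v ∈ R y → (0 : ℝ) ≤ ⟪u - v, x - y⟫_ℝ)
    (A : EuclideanSpace ℝ (Fin p) → EuclideanSpace ℝ (Fin p))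
    (L lam : ℝ) (hL : 0 < L) (hlam : 0 < lam) (hlamL : lam * L < 1)
    (hA : ∀ x y, ‖A x - A y‖ ≤ L * ‖x - y‖)
    -- J is the resolvent J_{lam R} = (I + lam R)⁻¹, with full domain:
    (J : EuclideanSpace ℝ (Fin p) → EuclideanSpace ℝ (Fin p))
    (hJ1 : ∀ u, lam⁻¹ • (u - J u) ∈ R (J u))
    (hJ2 : ∀ u x, lam⁻¹ • (u - x) ∈ R x → x = J u)
    (S : EuclideanSpace ℝ (Fin p) → EuclideanSpace ℝ (Fin p))
    (hS : ∀ x, S x = x - J (x - lam • A x) - lam • (A x - A (J (x - lam • A x)))) :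
    (∀ x y, ‖S x - S y‖ ≤ (1 + lam * L) * (2 + lam * L) * ‖x - y‖) ∧
    (∀ x, S x = 0 ↔ ∃ r ∈ R x, A x + r = 0) := by
  have hlam0 : lam ≠ 0 := ne_of_gt hlam
  -- J is nonexpansive
  have hJne : ∀ u v, ‖J u - J v‖ ≤ ‖u - v‖ := by
    intro u v
    have h := hRmono (J u) (J v) _ _ (hJ1 u) (hJ1 v)
    have hcomb : lam⁻¹ • (u - J u) - lam⁻¹ • (v - J v)
        = lam⁻¹ • ((u - J u) - (v - J v)) := by module
    rw [hcomb, real_inner_smul_left] at h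
    have hinv : (0:ℝ) < lam⁻¹ := inv_pos.mpr hlam
    have h2 : (0:ℝ) ≤ ⟪(u - J u) - (v - J v), J u - J v⟫_ℝ := by nlinarith
    have e : (u - J u) - (v - J v) = (u - v) - (J u - J v) := by abel
    rw [e, inner_sub_left, real_inner_self_eq_norm_sq] at h2
    have h4 := real_inner_le_norm (u - v) (J u - J v)
    by_cases hz : J u - J v = 0
    · have : J u - J v = 0 := hz
      rw [this, norm_zero]
      positivity
    · have hpos : (0:ℝ) < ‖J u - J v‖ := norm_pos_iff.mpr hz
      nlinarith
  constructor
  · intro x y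
    set x' := x - lam • A x with hx'
    set y' := y - lam • A y with hy'
    have key : S x - S y = ((x - y) - (J x' - J y'))
        - lam • ((A x - A y) - (A (J x') - A (J y'))) := by
      rw [hS x, hS y]
      simp only [smul_sub]
      abel
    have hd' : ‖x' - y'‖ ≤ (1 + lam * L) * ‖x - y‖ := by
      have e : x' - y' = (x - y) - lam • (A x - A y) := by
        rw [hx', hy', smul_sub]; abel
      rw [e]
      have h1 := norm_sub_le (x - y) (lam • (A x - A y))
      have h2 : ‖lam • (A x - A y)‖ = lam * ‖A x - A y‖ := by
        rw [norm_smul, Real.norm_eq_abs, abs_of_pos hlam]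
      have h3 := hA x y
      nlinarith
    have hJd := hJne x' y'
    have hAJ := hA (J x') (J y')
    have hAx := hA x y
    rw [key]
    have t1 := norm_sub_le ((x - y) - (J x' - J y'))
        (lam • ((A x - A y) - (A (J x') - A (J y'))))
    have t2 := norm_sub_le (x - y) (J x' - J y')
    have t3 : ‖lam • ((A x - A y) - (A (J x') - A (J y')))‖
        = lam * ‖(A x - A y) - (A (J x') - A (J y'))‖ := by
      rw [norm_smul, Real.norm_eq_abs, abs_of_pos hlam]
    have t4 := norm_sub_le (A x - A y) (A (J x') - A (J y'))
    have hb : ‖J x' - J y'‖ ≤ (1 + lam * L) * ‖x - y‖ := hJd.trans hd'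
    have hc : ‖A (J x') - A (J y')‖ ≤ L * ((1 + lam * L) * ‖x - y‖) :=
      hAJ.trans (mul_le_mul_of_nonneg_left hb hL.le)
    have h5 : lam * ‖(A x - A y) - (A (J x') - A (J y'))‖
        ≤ lam * (L * ‖x - y‖ + L * ((1 + lam * L) * ‖x - y‖)) := by
      apply mul_le_mul_of_nonneg_left _ hlam.le
      calc ‖(A x - A y) - (A (J x') - A (J y'))‖
          ≤ ‖A x - A y‖ + ‖A (J x') - A (J y')‖ := t4
        _ ≤ _ := add_le_add hAx hc
    have final : ‖((x - y) - (J x' - J y'))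
        - lam • ((A x - A y) - (A (J x') - A (J y')))‖
        ≤ ‖x - y‖ + (1 + lam * L) * ‖x - y‖
          + lam * (L * ‖x - y‖ + L * ((1 + lam * L) * ‖x - y‖)) := by
      linarith
    calc ‖((x - y) - (J x' - J y'))
        - lam • ((A x - A y) - (A (J x') - A (J y')))‖
        ≤ ‖x - y‖ + (1 + lam * L) * ‖x - y‖
          + lam * (L * ‖x - y‖ + L * ((1 + lam * L) * ‖x - y‖)) := final
      _ = (1 + lam * L) * (2 + lam * L) * ‖x - y‖ := by ring
  · intro x
    set u := x - lam • A x with hu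
    constructor
    · intro hSx
      have hS0 : x - J u - lam • (A x - A (J u)) = 0 := by rw [← hS x]; exact hSx
      have hxz : x = J u := by
        have e : x - J u = lam • (A x - A (J u)) := by
          have := hS0; rw [sub_eq_zero] at this; exact this
        have h1 : ‖x - J u‖ = lam * ‖A x - A (J u)‖ := by
          rw [e, norm_smul, Real.norm_eq_abs, abs_of_pos hlam]
        have h2 := hA x (J u)
        have h3 : ‖x - J u‖ ≤ lam * L * ‖x - J u‖ := by nlinarith
        have h4 : ‖x - J u‖ ≤ 0 := by nlinarith [norm_nonneg (x - J u)]
        have h5 : x - J u = 0 := norm_le_zero_iff.mp h4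
        exact sub_eq_zero.mp h5
      refine ⟨lam⁻¹ • (u - J u), ?_, ?_⟩
      · rw [hxz]
        exact hJ1 u
      · have e1 : u - J u = -(lam • A x) := by rw [← hxz, hu]; abel
        rw [e1, smul_neg, smul_smul, inv_mul_cancel₀ hlam0, one_smul]
        abel
    · rintro ⟨r, hr, hAr⟩
      have hrA : r = -A x := by
        linear_combination (norm := module) hAr
      have hmem : lam⁻¹ • (u - x) ∈ R x := by
        have e1 : u - x = -(lam • A x) := by rw [hu]; abel
        have e2 : lam⁻¹ • (u - x) = r := by
          rw [e1, smul_neg, smul_smul, inv_mul_cancel₀ hlam0, one_smul, hrA]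
        rwa [e2]
      have hx : x = J u := hJ2 u x hmem
      rw [hS x, ← hu, ← hx]
      simp
end

section
/- Consider the recursion x^{k+1} = x^k + θ_k(x^k − x^{k−1}) − d^k in ℝ^p with x^{−1} = x^0, where θ_k > 0 and d^k ∈ ℝ^p. Define τ_0 := 1, τ_{k+1} := τ_k θ_k, c_{−1} = c_0 := 0, c_k := c_{k−1} + τ_k for k ≥ 1, and the auxiliary sequences w^0 := 0, w^{k+1} := w^k − (1/τ_{k+1}) d^k, z^0 := x^0, z^{k+1} := z^k + (c_k/τ_{k+1}) d^k. Then x^k = z^k + c_k w^k for all k ≥ 0. -/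
/-- Change-of-variables identity `x^k = z^k + c_k w^k` for the
momentum recursion `x^{k+1} = x^k + θ_k(x^k − x^{k−1}) − d^k` with `x^{−1} = x⁰`. -/
theorem momentum_change_of_variables
    {p : ℕ}
    (x d : ℕ → EuclideanSpace ℝ (Fin p)) (θ : ℕ → ℝ) (hθ : ∀ k, 0 < θ k)
    -- recursion with x^{−1} = x⁰ :
    (hrec0 : x 1 = x 0 + θ 0 • (x 0 - x 0) - d 0)
    (hrec : ∀ k, x (k + 2) = x (k + 1) + θ (k + 1) • (x (k + 1) - x k) - d (k + 1))
    (τ c : ℕ → ℝ)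
    (hτ0 : τ 0 = 1) (hτ : ∀ k, τ (k + 1) = τ k * θ k)
    (hc0 : c 0 = 0) (hc : ∀ k, c (k + 1) = c k + τ (k + 1))
    (w z : ℕ → EuclideanSpace ℝ (Fin p))
    (hw0 : w 0 = 0) (hw : ∀ k, w (k + 1) = w k - (τ (k + 1))⁻¹ • d k)
    (hz0 : z 0 = x 0) (hz : ∀ k, z (k + 1) = z k + (c k / τ (k + 1)) • d k) :
    ∀ k, x k = z k + c k • w k := by
  have hτpos : ∀ k, 0 < τ k := by
    intro k
    induction k with
    | zero => rw [hτ0]; exact one_pos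
    | succ n ih => rw [hτ n]; exact mul_pos ih (hθ n)
  have hd : ∀ k, d k = τ (k + 1) • (w k - w (k + 1)) := by
    intro k
    rw [hw k, sub_sub_cancel, smul_smul, mul_inv_cancel₀ (hτpos (k + 1)).ne', one_smul]
  have hz' : ∀ k, z (k + 1) = z k + c k • (w k - w (k + 1)) := by
    intro k
    rw [hz k, hd k, smul_smul, div_mul_cancel₀ _ (hτpos (k + 1)).ne']
  have main : ∀ k, x k = z k + c k • w k ∧ x (k + 1) = z (k + 1) + c (k + 1) • w (k + 1) := by
    intro k
    induction k with
    | zero =>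
      refine ⟨by rw [hz0, hc0, zero_smul, add_zero], ?_⟩
      rw [hrec0, hd 0, hz' 0, hz0, hc 0, hc0, hw0]
      module
    | succ n ih =>
      refine ⟨ih.2, ?_⟩
      rw [hrec n, ih.2, ih.1, hd (n + 1), hz' (n + 1), hz' n, hc (n + 1), hc n, hτ (n + 1)]
      module
  intro k
  exact (main k).1
end

section
/- Let G : ℝ^p → ℝ^p satisfy the weak Minty condition ⟨Gx, x − x*⟩ ≥ −ρ‖Gx‖² for all x (with Gx* = 0) and be L-Lipschitz continuous. Consider the deterministic optimistic gradient iteration x^{k+1} := x^k − ω(η Gx^k − γ Gx^{k−1}) with x^{−1} = x⁰, where ω, γ, η > 0 satisfy 3ω²γ²L² ≤ 1 and η > γ. Define P_k := ‖x^k + ωγ Gx^{k−1} − x*‖² + ‖x^k − x^{k−1}‖². Then P_{k+1} ≤ P_k − 2ω(η − γ)(ωγ − ρ − 2ω(η − γ)) ‖Gx^k‖² for all k ≥ 0. -/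
open scoped InnerProductSpace

private lemma og_key {E : Type*} [NormedAddCommGroup E] [InnerProductSpace ℝ E]
    (u v w d : E) (τ s ρ : ℝ) (hτ : 0 ≤ τ)
    (hA : ⟪u, w⟫_ℝ ≥ -ρ * ‖u‖ ^ 2)
    (hC : 3 * s ^ 2 * ‖v‖ ^ 2 ≤ ‖d‖ ^ 2) :
    ‖w + s • (u - v) - τ • u‖ ^ 2 + ‖τ • u + s • v‖ ^ 2 ≤
      ‖w + s • (u - v)‖ ^ 2 + ‖d‖ ^ 2 - 2 * τ * (s - ρ - 2 * τ) * ‖u‖ ^ 2 := by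
  have e : ∀ z : E, ‖z‖ ^ 2 = ⟪z, z⟫_ℝ := fun z => (real_inner_self_eq_norm_sq z).symm
  have hB : (0:ℝ) ≤ ‖τ • u - s • v‖ ^ 2 := sq_nonneg _
  have hAτ : 0 ≤ 2 * τ * (⟪u, w⟫_ℝ + ρ * ‖u‖ ^ 2) := by
    apply mul_nonneg (by linarith)
    linarith [hA]
  simp only [e, inner_sub_left, inner_sub_right, inner_add_left, inner_add_right,
    real_inner_smul_left, real_inner_smul_right] at *
  nlinarith [real_inner_comm u v, real_inner_comm u w, real_inner_comm v w]

/-- One-iteration Lyapunov descent for the deterministic optimistic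
gradient method under a weak Minty condition.  The sequence is indexed with a
shift: `x (k+1)` is the iterate `x^k` of the paper (so `x 0 = x^{−1} = x⁰`), and
`P k = ‖x^k + ωγGx^{k−1} − x*‖² + ‖x^k − x^{k−1}‖²`. -/
theorem og_one_iteration_descent
    {p : ℕ}
    (G : EuclideanSpace ℝ (Fin p) → EuclideanSpace ℝ (Fin p))
    (L ρ ω γ η : ℝ)
    (xstar : EuclideanSpace ℝ (Fin p)) (hstar : G xstar = 0)
    (hMinty : ∀ x, ⟪G x, x - xstar⟫_ℝ ≥ -ρ * ‖G x‖ ^ 2)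
    (hL : ∀ x y, ‖G x - G y‖ ≤ L * ‖x - y‖)
    (hω : 0 < ω) (hγ : 0 < γ) (hη : γ < η)
    (hcond : 3 * ω ^ 2 * γ ^ 2 * L ^ 2 ≤ 1)
    (x : ℕ → EuclideanSpace ℝ (Fin p))
    (hinit : x 0 = x 1)  -- x^{−1} = x⁰
    (hrec : ∀ k, x (k + 2) = x (k + 1) - ω • (η • G (x (k + 1)) - γ • G (x k)))
    (P : ℕ → ℝ)
    (hP : ∀ k, P k = ‖x (k + 1) + (ω * γ) • G (x k) - xstar‖ ^ 2 +
                      ‖x (k + 1) - x k‖ ^ 2) :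
    ∀ k, P (k + 1) ≤ P k -
      2 * ω * (η - γ) * (ω * γ - ρ - 2 * ω * (η - γ)) * ‖G (x (k + 1))‖ ^ 2 := by
  intro k
  set b := x (k + 1) with hb
  set c := x k with hc
  set u := G b with hu
  set v := G b - G c with hv
  set w := b - xstar with hw
  set d := b - c with hd
  set s := ω * γ with hs
  set τ := ω * (η - γ) with hτdef
  have hτ : 0 ≤ τ := by
    apply mul_nonneg hω.le
    linarith
  have hA : ⟪u, w⟫_ℝ ≥ -ρ * ‖u‖ ^ 2 := hMinty b
  have hC : 3 * s ^ 2 * ‖v‖ ^ 2 ≤ ‖d‖ ^ 2 := by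
    have h1 : ‖v‖ ≤ L * ‖d‖ := hL b c
    have h2 : ‖v‖ ^ 2 ≤ L ^ 2 * ‖d‖ ^ 2 := by
      nlinarith [norm_nonneg v, norm_nonneg d]
    have h3 : 3 * (ω * γ) ^ 2 * ‖v‖ ^ 2 ≤ 3 * (ω * γ) ^ 2 * (L ^ 2 * ‖d‖ ^ 2) :=
      mul_le_mul_of_nonneg_left h2 (by positivity)
    have h4 : 0 ≤ (1 - 3 * ω ^ 2 * γ ^ 2 * L ^ 2) * ‖d‖ ^ 2 :=
      mul_nonneg (by linarith) (sq_nonneg _)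
    rw [hs]
    nlinarith [h3, h4]
  have key := og_key u v w d τ s ρ hτ hA hC
  have ea : x (k + 2) + s • G b - xstar = w + s • (u - v) - τ • u := by
    rw [hrec k]
    simp only [hw, hu, hv, hs, hτdef, ← hb, ← hc]
    module
  have eb : x (k + 2) - b = -(τ • u + s • v) := by
    rw [hrec k]
    simp only [hu, hv, hs, hτdef]
    module
  have ec : b + s • G c - xstar = w + s • (u - v) := by
    simp only [hw, hu, hv, hs]
    module
  have hP1 : P (k + 1) = ‖w + s • (u - v) - τ • u‖ ^ 2 + ‖τ • u + s • v‖ ^ 2 := by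
    rw [hP (k + 1)]
    rw [show k + 1 + 1 = k + 2 from rfl, ← hb, ← hu, ea, eb, norm_neg]
  have hP0 : P k = ‖w + s • (u - v)‖ ^ 2 + ‖d‖ ^ 2 := by
    rw [hP k, ← hb, ← hc, ec, ← hd]
  rw [hP1, hP0]
  calc ‖w + s • (u - v) - τ • u‖ ^ 2 + ‖τ • u + s • v‖ ^ 2
      ≤ ‖w + s • (u - v)‖ ^ 2 + ‖d‖ ^ 2 - 2 * τ * (s - ρ - 2 * τ) * ‖u‖ ^ 2 := key
    _ = ‖w + s • (u - v)‖ ^ 2 + ‖d‖ ^ 2 -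
        2 * ω * (η - γ) * (ω * γ - ρ - 2 * ω * (η - γ)) * ‖u‖ ^ 2 := by
        rw [hτdef, hs]; ring
end
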